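/- arXiv:1808.00707 — 5 statements merged into one kernel-verified Lean document; each statement's English description precedes it below -/
import Mathlib

section
/- Let T be a tidy binary tree (all leaves at the same height h(T)) with height greater than m, and suppose T is locally (s,m)-large: for every vertex a with h(a)+m ≤ h(T) there exists an integer 1 ≤ n ≤ m such that the subtree T(a,n) of height at most n rooted at a has at least 2^{sn} leaves. Then T is globally (s,2^{-sm})-large: for every integer N with 1 ≤ N ≤ h(T), the number of vertices of T at height N is at least 2^{-sm}·2^{sN}. -/
open Finset

/-- A (finite) binary tree: a prefix-closed finite set of binary strings containing the root. -/
def IsTree (T : Finset (List Bool)) : Prop :=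
  [] ∈ T ∧ ∀ v ∈ T, ∀ u : List Bool, u <+: v → u ∈ T

/-- The height of a finite tree: the maximal length of a vertex. -/
def height (T : Finset (List Bool)) : ℕ := T.sup List.length

/-- The set of leaves of `T`: vertices with no children in `T`. -/
noncomputable def leaves (T : Finset (List Bool)) : Finset (List Bool) := by
  classical exact T.filter (fun v => ∀ b : Bool, v ++ [b] ∉ T)

/-- A tree is tidy if every leaf is at maximal height. -/
def Tidy (T : Finset (List Bool)) : Prop :=
  ∀ v ∈ leaves T, v.length = height T

/-- `subtree T a n` is the descendant subtree of `a` in `T`, truncated at depth `n`. -/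
noncomputable def subtree (T : Finset (List Bool)) (a : List Bool) (n : ℕ) :
    Finset (List Bool) := by
  classical exact T.filter (fun v => a <+: v ∧ v.length ≤ a.length + n)

/-- The vertices of `T` at height `N`. -/
noncomputable def level (T : Finset (List Bool)) (N : ℕ) : Finset (List Bool) := by
  classical exact T.filter (fun v => v.length = N)

/-- Descendants of `a` at depth exactly `k` below `a`. -/
noncomputable def desc (T : Finset (List Bool)) (a : List Bool) (k : ℕ) :
    Finset (List Bool) := by
  classical exact T.filter (fun v => a <+: v ∧ v.length = a.length + k)

lemma mem_desc {T : Finset (List Bool)} {a v : List Bool} {k : ℕ} :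
    v ∈ desc T a k ↔ v ∈ T ∧ a <+: v ∧ v.length = a.length + k := by
  simp [desc]

/-- Every non-maximal-height vertex of a tidy tree has a child. -/
lemma exists_child {T : Finset (List Bool)} (htidy : Tidy T)
    {a : List Bool} (ha : a ∈ T) (hlt : a.length < height T) :
    ∃ b : Bool, a ++ [b] ∈ T := by
  by_contra h
  push_neg at h
  have : a ∈ leaves T := by simp [leaves, ha, h]
  exact absurd (htidy a this) (Nat.ne_of_lt hlt)

/-- Descendant sets are nonempty as long as we stay below the height. -/
lemma desc_nonempty {T : Finset (List Bool)} (htidy : Tidy T) :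
    ∀ k : ℕ, ∀ a ∈ T, a.length + k ≤ height T → (desc T a k).Nonempty := by
  intro k
  induction k with
  | zero =>
    intro a ha _
    exact ⟨a, mem_desc.mpr ⟨ha, List.prefix_refl a, rfl⟩⟩
  | succ k ih =>
    intro a ha hle
    obtain ⟨v, hv⟩ := ih a ha (by omega)
    rw [mem_desc] at hv
    obtain ⟨hvT, hav, hvl⟩ := hv
    obtain ⟨b, hb⟩ := exists_child htidy hvT (by omega)
    refine ⟨v ++ [b], mem_desc.mpr ⟨hb, hav.trans (List.prefix_append v [b]), ?_⟩⟩
    simp only [List.length_append, List.length_singleton, hvl]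
    omega

/-- In a tidy tree, leaves of the truncated subtree `subtree T a n` all lie at
depth exactly `n` below `a`, provided `a.length + n ≤ height T`. -/
lemma leaves_subtree_subset_desc {T : Finset (List Bool)} (htidy : Tidy T)
    {a : List Bool} {n : ℕ} (hle : a.length + n ≤ height T) :
    leaves (subtree T a n) ⊆ desc T a n := by
  intro v hv
  simp only [leaves, Finset.mem_filter, subtree] at hv
  obtain ⟨⟨hvT, hav, hvl⟩, hv2⟩ := hv
  rcases eq_or_lt_of_le hvl with h | h
  · exact mem_desc.mpr ⟨hvT, hav, h⟩
  · exfalso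
    obtain ⟨b, hb⟩ := exists_child htidy hvT (by omega)
    exact hv2 b ⟨hb, hav.trans (List.prefix_append v [b]), by simp; omega⟩

lemma key_lemma (T : Finset (List Bool)) (s : ℝ) (m : ℕ)
    (hs : 0 < s)
    (htree : IsTree T) (htidy : Tidy T)
    (hlarge : ∀ a ∈ T, a.length + m ≤ height T →
      ∃ n : ℕ, 1 ≤ n ∧ n ≤ m ∧ (2:ℝ) ^ (s * (n:ℝ)) ≤ ((leaves (subtree T a n)).card : ℝ)) :
    ∀ k : ℕ, ∀ a ∈ T, a.length + k ≤ height T →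
      (2:ℝ) ^ (s * ((k:ℝ) - (m:ℝ))) ≤ ((desc T a k).card : ℝ) := by
  intro k
  induction k using Nat.strong_induction_on with
  | _ k ih =>
  intro a ha hle
  by_cases hkm : k ≤ m
  · -- trivial case: exponent ≤ 0, and desc is nonempty
    have h1 : (2:ℝ) ^ (s * ((k:ℝ) - (m:ℝ))) ≤ 1 := by
      apply Real.rpow_le_one_of_one_le_of_nonpos (by norm_num)
      have : (k:ℝ) ≤ (m:ℝ) := by exact_mod_cast hkm
      nlinarith
    have h2 : (1:ℝ) ≤ ((desc T a k).card : ℝ) := by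
      have := desc_nonempty htidy k a ha hle
      have := Finset.card_pos.mpr this
      exact_mod_cast this
    linarith
  · push_neg at hkm
    obtain ⟨n, hn1, hnm, hcard⟩ := hlarge a ha (by omega)
    have hnk : n < k := by omega
    have hank : a.length + n ≤ height T := by omega
    -- step 1 : 2^{sn} ≤ card (desc T a n)
    have hstep1 : (2:ℝ) ^ (s * (n:ℝ)) ≤ ((desc T a n).card : ℝ) := by
      refine hcard.trans ?_
      exact_mod_cast Finset.card_le_card (leaves_subtree_subset_desc htidy hank)
    -- the biUnion of descendants
    have hsubset : (desc T a n).biUnion (fun b => desc T b (k - n)) ⊆ desc T a k := by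
      intro v hv
      rw [Finset.mem_biUnion] at hv
      obtain ⟨b, hb, hvb⟩ := hv
      rw [mem_desc] at hb hvb ⊢
      obtain ⟨hbT, hab, hbl⟩ := hb
      obtain ⟨hvT, hbv, hvl⟩ := hvb
      exact ⟨hvT, hab.trans hbv, by omega⟩
    have hdisj : ∀ b₁ ∈ desc T a n, ∀ b₂ ∈ desc T a n, b₁ ≠ b₂ →
        Disjoint (desc T b₁ (k - n)) (desc T b₂ (k - n)) := by
      intro b₁ hb₁ b₂ hb₂ hne
      rw [Finset.disjoint_left]
      intro v hv1 hv2
      rw [mem_desc] at hv1 hv2 hb₁ hb₂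
      apply hne
      have hpre : b₁ <+: b₂ := List.prefix_of_prefix_length_le hv1.2.1 hv2.2.1 (by omega)
      exact hpre.eq_of_length (by omega)
    have hcard_biUnion :
        ∑ b ∈ desc T a n, ((desc T b (k - n)).card)
          = ((desc T a n).biUnion (fun b => desc T b (k - n))).card :=
      (Finset.card_biUnion hdisj).symm
    -- each term is large by the inductive hypothesis
    have hterm : ∀ b ∈ desc T a n,
        (2:ℝ) ^ (s * (((k - n : ℕ):ℝ) - (m:ℝ))) ≤ ((desc T b (k - n)).card : ℝ) := by
      intro b hb
      rw [mem_desc] at hb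
      exact ih (k - n) (by omega) b hb.1 (by omega)
    have hsum : ((desc T a n).card : ℝ) * (2:ℝ) ^ (s * (((k - n : ℕ):ℝ) - (m:ℝ)))
        ≤ ∑ b ∈ desc T a n, ((desc T b (k - n)).card : ℝ) := by
      have h := Finset.card_nsmul_le_sum (desc T a n)
        (fun b => ((desc T b (k - n)).card : ℝ)) _ hterm
      rwa [nsmul_eq_mul] at h
    have hchain : ((desc T a n).card : ℝ) * (2:ℝ) ^ (s * (((k - n : ℕ):ℝ) - (m:ℝ)))
        ≤ ((desc T a k).card : ℝ) := by
      refine hsum.trans ?_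
      have := Finset.card_le_card hsubset
      rw [← hcard_biUnion] at this
      push_cast
      exact_mod_cast this
    have hpow : (2:ℝ) ^ (s * ((k:ℝ) - (m:ℝ)))
        = (2:ℝ) ^ (s * (n:ℝ)) * (2:ℝ) ^ (s * (((k - n : ℕ):ℝ) - (m:ℝ))) := by
      rw [← Real.rpow_add (by norm_num : (0:ℝ) < 2)]
      congr 1
      have : ((k - n : ℕ):ℝ) = (k:ℝ) - (n:ℝ) := by
        push_cast [Nat.cast_sub hnk.le]; ring
      rw [this]; ring
    rw [hpow]
    calc (2:ℝ) ^ (s * (n:ℝ)) * (2:ℝ) ^ (s * (((k - n : ℕ):ℝ) - (m:ℝ)))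
        ≤ ((desc T a n).card : ℝ) * (2:ℝ) ^ (s * (((k - n : ℕ):ℝ) - (m:ℝ))) := by
          apply mul_le_mul_of_nonneg_right hstep1 (Real.rpow_nonneg (by norm_num) _)
      _ ≤ ((desc T a k).card : ℝ) := hchain

/-- Regularity lemma (largeness): a tidy, locally (s,m)-large binary tree is
globally (s, 2^{-sm})-large. -/
theorem stmt0 (T : Finset (List Bool)) (s : ℝ) (m : ℕ)
    (hs : 0 < s) (hm : 1 ≤ m)
    (htree : IsTree T) (htidy : Tidy T) (hht : m < height T)
    (hlarge : ∀ a ∈ T, a.length + m ≤ height T →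
      ∃ n : ℕ, 1 ≤ n ∧ n ≤ m ∧ (2:ℝ) ^ (s * (n:ℝ)) ≤ ((leaves (subtree T a n)).card : ℝ)) :
    ∀ N : ℕ, 1 ≤ N → N ≤ height T →
      (2:ℝ) ^ (-(s * (m:ℝ))) * (2:ℝ) ^ (s * (N:ℝ)) ≤ ((level T N).card : ℝ) := by
  intro N _ hN
  have hkey := key_lemma T s m hs htree htidy hlarge N [] htree.1 (by simpa using hN)
  have hlev : desc T [] N = level T N := by
    ext v
    simp [mem_desc, level, Finset.mem_filter, List.nil_prefix]
  rw [hlev] at hkey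
  refine le_trans (le_of_eq ?_) hkey
  rw [← Real.rpow_add (by norm_num : (0:ℝ) < 2)]
  ring_nf
end

section
/- For a tidy binary tree T of height h(T), assign to each vertex a the s-weight W(a)=2^{-s·h(a)} for a fixed s ∈ [0,1]. If T is obtained from the single-root tree by repeatedly attaching at a leaf b a tidy subtree T(b,n_b) with at least 2^{s·n_b} leaves (for integers n_b ≥ 1), then the total s-weight of the leaves of T is at least 1. -/
open Finset

/-- Trees grown from the single root by repeatedly attaching, at a leaf `b`, a tidy tree of
height `n_b ≥ 1` with at least `2^{s n_b}` leaves. -/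
inductive Grown (s : ℝ) : Finset (List Bool) → Prop
  | root : Grown s {([] : List Bool)}
  | attach (T : Finset (List Bool)) (b : List Bool) (S : Finset (List Bool)) (n : ℕ) :
      Grown s T → b ∈ leaves T → 1 ≤ n → IsTree S → Tidy S → height S = n →
      (2:ℝ) ^ (s * (n:ℝ)) ≤ ((leaves S).card : ℝ) →
      Grown s (T ∪ S.image (fun v => b ++ v))

lemma mem_leaves' {T : Finset (List Bool)} {v : List Bool} :
    v ∈ leaves T ↔ v ∈ T ∧ ∀ b : Bool, v ++ [b] ∉ T := by
  classical simp [leaves]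

lemma grown_isTree {s : ℝ} {T : Finset (List Bool)} (h : Grown s T) : IsTree T := by
  induction h with
  | root =>
      refine ⟨by simp, ?_⟩
      intro v hv u hu
      simp only [Finset.mem_singleton] at hv
      subst hv
      simpa using List.prefix_nil.mp hu
  | attach T b S n hT hb hn hS hTidy hht hcard ih =>
      obtain ⟨hroot, hpref⟩ := ih
      refine ⟨Finset.mem_union_left _ hroot, ?_⟩
      intro v hv u hu
      rcases Finset.mem_union.mp hv with hv | hv
      · exact Finset.mem_union_left _ (hpref v hv u hu)
      · obtain ⟨w, hw, rfl⟩ := Finset.mem_image.mp hv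
        rcases le_total u.length b.length with hlen | hlen
        · exact Finset.mem_union_left _
            (hpref b (mem_leaves'.mp hb).1 u
              (List.prefix_of_prefix_length_le hu (List.prefix_append b w) hlen))
        · have hbu : b <+: u :=
            List.prefix_of_prefix_length_le (List.prefix_append b w) hu hlen
          obtain ⟨u', rfl⟩ := hbu
          have : u' <+: w := (List.prefix_append_right_inj b).mp hu
          exact Finset.mem_union_right _
            (Finset.mem_image.mpr ⟨u', hS.2 w hw u' this, rfl⟩)

/-- The total `s`-weight of the leaves of a tree grown by attaching `(s,n)`-large tidy
subtrees is at least `1` (the weight of the root). -/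
theorem stmt2 (s : ℝ) (hs0 : 0 ≤ s) (hs1 : s ≤ 1) (T : Finset (List Bool))
    (hT : Grown s T) :
    1 ≤ ∑ v ∈ leaves T, (2:ℝ) ^ (-(s * (v.length : ℝ))) := by
  induction hT with
  | root =>
      have hl : leaves {([] : List Bool)} = {([] : List Bool)} := by
        apply Finset.Subset.antisymm
        · intro v hv; exact (mem_leaves'.mp hv).1
        · intro v hv
          simp only [Finset.mem_singleton] at hv
          subst hv
          rw [mem_leaves']
          simp
      rw [hl]
      simp
  | attach T b S n hT hb hn hS hTidy hht hcard ih =>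
      classical
      have hTtree := grown_isTree hT
      have hbT : b ∈ T := (mem_leaves'.mp hb).1
      have hbl : ∀ c : Bool, b ++ [c] ∉ T := (mem_leaves'.mp hb).2
      -- no proper extension of b is in T
      have hmax : ∀ v ∈ T, b <+: v → v = b := by
        intro v hv hpre
        obtain ⟨w, rfl⟩ := hpre
        cases w with
        | nil => simp
        | cons c w' =>
            exfalso
            exact hbl c (hTtree.2 _ hv (b ++ [c]) ⟨w', by simp⟩)
      -- leaves S is nonempty
      have hSne : (leaves S).Nonempty := by
        have h0 : (0:ℝ) < ((leaves S).card : ℝ) :=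
          lt_of_lt_of_le (Real.rpow_pos_of_pos two_pos _) hcard
        exact Finset.card_pos.mp (by exact_mod_cast h0)
      -- every leaf of S has length n ≥ 1
      have hlenS : ∀ w ∈ leaves S, w.length = n := fun w hw => hht ▸ hTidy w hw
      obtain ⟨w0, hw0⟩ := hSne
      have hw0len : w0.length = n := hlenS w0 hw0
      have hw0ne : w0 ≠ [] := by
        intro h; rw [h] at hw0len; simp at hw0len; omega
      obtain ⟨c0, w0', rfl⟩ : ∃ c w', w0 = c :: w' := by
        cases w0 with
        | nil => exact absurd rfl hw0ne
        | cons c w' => exact ⟨c, w', rfl⟩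
      have hc0 : [c0] ∈ S := hS.2 _ (mem_leaves'.mp hw0).1 [c0] ⟨w0', rfl⟩
      -- the key set identity
      have hkey : leaves (T ∪ S.image (fun v => b ++ v)) =
          (leaves T).erase b ∪ (leaves S).image (fun v => b ++ v) := by
        ext v
        constructor
        · intro hv
          obtain ⟨hvT, hvl⟩ := mem_leaves'.mp hv
          rcases Finset.mem_union.mp hvT with hvT | hvT
          · refine Finset.mem_union_left _ (Finset.mem_erase.mpr ⟨?_, ?_⟩)
            · rintro rfl
              exact hvl c0 (Finset.mem_union_right _
                (Finset.mem_image.mpr ⟨[c0], hc0, rfl⟩))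
            · exact mem_leaves'.mpr ⟨hvT, fun c hc =>
                hvl c (Finset.mem_union_left _ hc)⟩
          · obtain ⟨w, hw, rfl⟩ := Finset.mem_image.mp hvT
            refine Finset.mem_union_right _ (Finset.mem_image.mpr ⟨w, ?_, rfl⟩)
            refine mem_leaves'.mpr ⟨hw, fun c hc => ?_⟩
            exact hvl c (Finset.mem_union_right _
              (Finset.mem_image.mpr ⟨w ++ [c], hc, by simp⟩))
        · intro hv
          rcases Finset.mem_union.mp hv with hv | hv
          · obtain ⟨hvb, hvL⟩ := Finset.mem_erase.mp hv
            obtain ⟨hvT, hvl⟩ := mem_leaves'.mp hvL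
            refine mem_leaves'.mpr ⟨Finset.mem_union_left _ hvT, fun c hc => ?_⟩
            rcases Finset.mem_union.mp hc with hc | hc
            · exact hvl c hc
            · obtain ⟨w, hw, hweq⟩ := Finset.mem_image.mp hc
              -- b ++ w = v ++ [c]; b and v are both prefixes of v ++ [c]
              have hbpre : b <+: v ++ [c] := ⟨w, hweq⟩
              rcases le_total b.length v.length with hlen | hlen
              · have : b <+: v := List.prefix_of_prefix_length_le hbpre
                  (by exact ⟨[c], rfl⟩) hlen
                exact hvb (hmax v hvT this)
              · have hvpre : v <+: b :=
                  List.prefix_of_prefix_length_le (⟨[c], rfl⟩ : v <+: v ++ [c])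
                    hbpre hlen
                obtain ⟨t, rfl⟩ := hvpre
                have ht : t <+: [c] := (List.prefix_append_right_inj v).mp hbpre
                cases t with
                | nil => simp at hvb
                | cons c' t' =>
                    obtain ⟨hc', ht'⟩ := List.cons_prefix_cons.mp ht
                    have : t' = [] := List.prefix_nil.mp ht'
                    subst this
                    subst hc'
                    exact hvl _ hbT
          · obtain ⟨w, hw, rfl⟩ := Finset.mem_image.mp hv
            refine mem_leaves'.mpr ⟨Finset.mem_union_right _
              (Finset.mem_image.mpr ⟨w, (mem_leaves'.mp hw).1, rfl⟩), fun c hc => ?_⟩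
            rcases Finset.mem_union.mp hc with hc | hc
            · have : b ++ w ++ [c] = b := by
                refine hmax _ hc ⟨w ++ [c], by simp⟩
              have := congrArg List.length this
              simp at this
            · obtain ⟨w', hw', hweq⟩ := Finset.mem_image.mp hc
              have : w' = w ++ [c] := by
                apply List.append_cancel_left (as := b)
                rw [hweq]; simp
              rw [this] at hw'
              exact (mem_leaves'.mp hw).2 c hw'
      rw [hkey]
      -- disjointness
      have hdisj : Disjoint ((leaves T).erase b)
          ((leaves S).image (fun v => b ++ v)) := by
        rw [Finset.disjoint_right]
        intro v hv hv'
        obtain ⟨w, hw, rfl⟩ := Finset.mem_image.mp hv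
        obtain ⟨hvb, hvL⟩ := Finset.mem_erase.mp hv'
        have : b ++ w = b := hmax _ (mem_leaves'.mp hvL).1 ⟨w, rfl⟩
        have hwnil : w = [] := by simpa using this
        have := hlenS w hw
        rw [hwnil] at this
        simp at this; omega
      rw [Finset.sum_union hdisj]
      -- sum over the image
      have hinj : Set.InjOn (fun v => b ++ v) (leaves S) := fun x _ y _ h =>
        List.append_cancel_left h
      rw [Finset.sum_image hinj]
      have himg : ∑ w ∈ leaves S, (2:ℝ) ^ (-(s * (((b ++ w).length : ℕ) : ℝ))) =
          ((leaves S).card : ℝ) * (2:ℝ) ^ (-(s * ((b.length : ℝ) + (n : ℝ)))) := by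
        rw [Finset.sum_congr rfl (fun w hw => ?_), Finset.sum_const, nsmul_eq_mul]
        have : ((b ++ w).length : ℝ) = (b.length : ℝ) + (n : ℝ) := by
          have := hlenS w hw
          push_cast [List.length_append, this]
          ring
        rw [this]
      rw [himg]
      have hws : (2:ℝ) ^ (-(s * (b.length : ℝ))) ≤
          ((leaves S).card : ℝ) * (2:ℝ) ^ (-(s * ((b.length : ℝ) + (n : ℝ)))) := by
        calc (2:ℝ) ^ (-(s * (b.length : ℝ)))
            = (2:ℝ) ^ (s * (n:ℝ)) * (2:ℝ) ^ (-(s * ((b.length : ℝ) + (n : ℝ)))) := by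
              rw [← Real.rpow_add two_pos]; ring_nf
          _ ≤ ((leaves S).card : ℝ) * (2:ℝ) ^ (-(s * ((b.length : ℝ) + (n : ℝ)))) := by
              apply mul_le_mul_of_nonneg_right hcard (Real.rpow_nonneg (by norm_num) _)
      have herase : ∑ v ∈ (leaves T).erase b, (2:ℝ) ^ (-(s * (v.length : ℝ))) +
          (2:ℝ) ^ (-(s * (b.length : ℝ))) =
          ∑ v ∈ leaves T, (2:ℝ) ^ (-(s * (v.length : ℝ))) :=
        Finset.sum_erase_add _ _ hb
      linarith [ih]
end

section
/- If F ⊆ [0,1]^d is compact and E is a microset of F that intersects the open cube (0,1)^d, then dim_L F ≤ dim_H E, where dim_L denotes the lower dimension and dim_H the Hausdorff dimension. In particular, dim_L F ≤ inf over all microsets E in the gallery of F of dim_H E. -/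
/-!
Lower covering bounds `N_r(B(x,R) ∩ F) ≥ C (R/r)^s` pass by rescaling to every miniset of `F`,
on balls inside the unit cube, and then, up to the factor `4^s`, to their Hausdorff limit `E`.
Around a point `z` of `E` in the open cube they let one grow a tree in `E` whose nodes at depth
`k` are `≈ bᵏ` apart, each with `M ≈ C (10 b)⁻ˢ` children. Pushing the uniform measure on the
branches forward to `E`, a set of diameter `≈ bᵏ` gets mass at most `M⁻ᵏ ≤ bᵏᵗ` for any `t < s`
once `b` is small, so the mass distribution principle gives `dim_H E ≥ t`.
-/

open Set Metric Filter Topology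

/-- Smallest number of axis-parallel cubes of side length `r` (closed balls of radius `r/2`
in the sup metric on `Fin d → ℝ`) needed to cover `A`. -/
noncomputable def coverNum (d : ℕ) (A : Set (Fin d → ℝ)) (r : ℝ) : ℕ :=
  sInf {n : ℕ | ∃ t : Finset (Fin d → ℝ), t.card = n ∧ A ⊆ ⋃ x ∈ t, closedBall x (r / 2)}

/-- The lower dimension. -/
noncomputable def lowerDim (d : ℕ) (F : Set (Fin d → ℝ)) : ℝ :=
  sSup {s : ℝ | 0 ≤ s ∧ ∃ C : ℝ, 0 < C ∧ ∀ R : ℝ, 0 < R → R < 1 → ∀ r : ℝ, 0 < r → r < R →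
    ∀ x ∈ F, C * (R / r) ^ s ≤ (coverNum d (closedBall x R ∩ F) r : ℝ)}

/-- The Assouad dimension. -/
noncomputable def assouadDim (d : ℕ) (F : Set (Fin d → ℝ)) : ℝ :=
  sInf {s : ℝ | 0 ≤ s ∧ ∃ C : ℝ, 0 < C ∧ ∀ R : ℝ, 0 < R → ∀ r : ℝ, 0 < r → r < R →
    ∀ x ∈ F, (coverNum d (closedBall x R ∩ F) r : ℝ) ≤ C * (R / r) ^ s}

/-- Upper box dimension. -/
noncomputable def ubDim (d : ℕ) (A : Set (Fin d → ℝ)) : ℝ :=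
  Filter.limsup (fun r : ℝ => Real.log (coverNum d A r) / (-Real.log r)) (𝓝[>] (0:ℝ))

/-- Lower box dimension. -/
noncomputable def lbDim (d : ℕ) (A : Set (Fin d → ℝ)) : ℝ :=
  Filter.liminf (fun r : ℝ => Real.log (coverNum d A r) / (-Real.log r)) (𝓝[>] (0:ℝ))

/-- `D` is a miniset of `F`: `D = (λF + t) ∩ [0,1]^d` with `λ ≥ 1`, and `D` is nonempty. -/
def IsMiniset (d : ℕ) (F D : Set (Fin d → ℝ)) : Prop :=
  ∃ lam : ℝ, 1 ≤ lam ∧ ∃ t : Fin d → ℝ,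
    D = ((fun x => lam • x + t) '' F) ∩ Icc 0 1 ∧ D.Nonempty

/-- `E` is a microset of `F`: a Hausdorff-metric limit of minisets of `F`. -/
def IsMicroset (d : ℕ) (F E : Set (Fin d → ℝ)) : Prop :=
  IsCompact E ∧ E ⊆ Icc 0 1 ∧ ∃ D : ℕ → Set (Fin d → ℝ),
    (∀ n, IsMiniset d F (D n)) ∧
    Tendsto (fun n => hausdorffDist (D n) E) atTop (𝓝 0)

/-- The gallery of `F`: microsets intersecting the interior of the unit cube. -/
def InGallery (d : ℕ) (F E : Set (Fin d → ℝ)) : Prop :=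
  IsMicroset d F E ∧ (E ∩ interior (Icc (0 : Fin d → ℝ) 1)).Nonempty

section Covering

variable {d : ℕ}

lemma coverNum_le_card {A : Set (Fin d → ℝ)} {r : ℝ} {t : Finset (Fin d → ℝ)}
    (h : A ⊆ ⋃ x ∈ t, closedBall x (r / 2)) : coverNum d A r ≤ t.card :=
  Nat.sInf_le ⟨t, rfl, h⟩

lemma exists_finset_card_eq_coverNum {A : Set (Fin d → ℝ)} (hA : TotallyBounded A) {r : ℝ}
    (hr : 0 < r) :
    ∃ t : Finset (Fin d → ℝ), t.card = coverNum d A r ∧ A ⊆ ⋃ x ∈ t, closedBall x (r / 2) := by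
  refine Nat.sInf_mem (s := {n | ∃ t : Finset (Fin d → ℝ), t.card = n ∧
    A ⊆ ⋃ x ∈ t, closedBall x (r / 2)}) ?_
  obtain ⟨t, ht, hAt⟩ := Metric.totallyBounded_iff.mp hA (r / 2) (half_pos hr)
  refine ⟨ht.toFinset.card, ht.toFinset, rfl, hAt.trans ?_⟩
  simp only [Set.Finite.mem_toFinset]
  exact iUnion₂_mono fun x _ => ball_subset_closedBall

lemma coverNum_le_of_subset_image {A A' : Set (Fin d → ℝ)} (hA' : TotallyBounded A')
    {ψ : (Fin d → ℝ) → Fin d → ℝ} {K : ℝ} (hK : 0 ≤ K) (hψ : ∀ x y, dist (ψ x) (ψ y) ≤ K * dist x y)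
    (hAA' : A ⊆ ψ '' A') {r : ℝ} (hr : 0 < r) :
    coverNum d A (K * r) ≤ coverNum d A' r := by
  obtain ⟨t, ht, hA't⟩ := exists_finset_card_eq_coverNum hA' hr
  rw [← ht]
  refine (coverNum_le_card (t := t.image ψ) ?_).trans Finset.card_image_le
  intro x hx
  obtain ⟨a, ha, rfl⟩ := hAA' hx
  obtain ⟨c, hc, hac⟩ := mem_iUnion₂.mp (hA't ha)
  refine mem_iUnion₂.mpr ⟨ψ c, Finset.mem_image_of_mem ψ hc, ?_⟩
  calc dist (ψ a) (ψ c) ≤ K * dist a c := hψ a c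
    _ ≤ K * (r / 2) := mul_le_mul_of_nonneg_left hac hK
    _ = K * r / 2 := by ring

lemma coverNum_le_of_subset_thickening {A A' : Set (Fin d → ℝ)} (hA' : TotallyBounded A')
    {δ : ℝ} (hAA' : A ⊆ thickening δ A') {r : ℝ} (hr : 0 < r) :
    coverNum d A (r + 2 * δ) ≤ coverNum d A' r := by
  obtain ⟨t, ht, hA't⟩ := exists_finset_card_eq_coverNum hA' hr
  rw [← ht]
  refine coverNum_le_card fun a ha => ?_
  obtain ⟨a', ha', haa'⟩ := mem_thickening_iff.mp (hAA' ha)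
  obtain ⟨c, hc, ha'c⟩ := mem_iUnion₂.mp (hA't ha')
  refine mem_iUnion₂.mpr ⟨c, hc, ?_⟩
  rw [mem_closedBall] at ha'c ⊢
  linarith [dist_triangle a a' c]

/-- Greedy: as long as the `ε`-balls around the chosen points do not cover `A`, one more point
can be chosen. -/
lemma exists_finset_pairwise_lt_dist {A : Set (Fin d → ℝ)} {ε : ℝ} (hε : 0 ≤ ε) :
    ∀ m ≤ coverNum d A (2 * ε), ∃ P : Finset (Fin d → ℝ), ↑P ⊆ A ∧ P.card = m ∧
      (P : Set (Fin d → ℝ)).Pairwise fun p q => ε < dist p q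
  | 0, _ => ⟨∅, by simp, rfl, by simp⟩
  | m + 1, hm => by
    obtain ⟨P, hPA, hPm, hP⟩ := exists_finset_pairwise_lt_dist (A := A) hε m (by omega)
    have hnot : ¬ A ⊆ ⋃ p ∈ P, closedBall p (2 * ε / 2) := fun h => by
      have := coverNum_le_card h
      omega
    obtain ⟨a, haA, ha⟩ := not_subset.mp hnot
    simp only [mul_div_cancel_left₀ ε two_ne_zero, mem_iUnion₂, mem_closedBall, not_exists,
      not_le] at ha
    have haP : a ∉ P := fun h => by simpa using (ha a h).trans_le' hε
    refine ⟨insert a P, ?_, by rw [Finset.card_insert_of_notMem haP, hPm], ?_⟩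
    · rw [Finset.coe_insert]
      exact insert_subset haA hPA
    · rw [Finset.coe_insert]
      exact hP.insert fun p hp _ => ⟨ha p hp, by rw [dist_comm]; exact ha p hp⟩

end Covering

section Tree

variable {X : Type*} {M : ℕ}

def treeNode (z : X) (child : ℕ → X → Fin M → X) (ω : ℕ → Fin M) : ℕ → X
  | 0 => z
  | k + 1 => child k (treeNode z child ω k) (ω k)

lemma treeNode_congr {z : X} {child : ℕ → X → Fin M → X} {ω ω' : ℕ → Fin M} :
    ∀ {k : ℕ}, (∀ i < k, ω i = ω' i) → treeNode z child ω k = treeNode z child ω' k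
  | 0, _ => rfl
  | k + 1, h => by
    simp only [treeNode, treeNode_congr fun i hi => h i (hi.trans k.lt_succ_self),
      h k k.lt_succ_self]

lemma continuous_treeNode [TopologicalSpace X] (z : X) (child : ℕ → X → Fin M → X) (k : ℕ) :
    Continuous fun ω => treeNode z child ω k := by
  refine IsLocallyConstant.continuous ((IsLocallyConstant.iff_eventually_eq _).mpr fun ω => ?_)
  have hcyl : ∀ᶠ ω' in 𝓝 ω, ∀ i ∈ Finset.range k, ω' i = ω i :=
    (Finset.eventually_all _).mpr fun i _ => by
      simpa [nhds_discrete] using (continuous_apply i).tendsto ω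
  filter_upwards [hcyl] with ω' hω'
  exact treeNode_congr fun i hi => hω' i (Finset.mem_range.mpr hi)

variable [MetricSpace X]

def IsBranching (E : Set X) (z : X) (r b : ℝ) (child : ℕ → X → Fin M → X) : Prop :=
  ∀ k, ∀ x ∈ E, dist x z ≤ 2 * r →
    (∀ i, child k x i ∈ E ∧ dist (child k x i) x ≤ r * b ^ k) ∧
      Pairwise fun i j => 5 * (r * b ^ (k + 1)) < dist (child k x i) (child k x j)

namespace IsBranching

variable {E : Set X} {z : X} {r b : ℝ} {child : ℕ → X → Fin M → X}

lemma treeNode_mem_and_dist_le (hc : IsBranching E z r b child) (hz : z ∈ E) (hr : 0 ≤ r)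
    (hb0 : 0 ≤ b) (hb : b ≤ 1 / 2) (ω : ℕ → Fin M) :
    ∀ k, treeNode z child ω k ∈ E ∧ dist (treeNode z child ω k) z ≤ 2 * r * (1 - b ^ k)
  | 0 => ⟨hz, by simp [treeNode]⟩
  | k + 1 => by
    obtain ⟨hE, hdist⟩ := treeNode_mem_and_dist_le hc hz hr hb0 hb ω k
    have hbk : 0 ≤ b ^ k := pow_nonneg hb0 k
    have hkz : 2 * r * (1 - b ^ k) ≤ 2 * r := by nlinarith
    obtain ⟨hmem, hstep⟩ := (hc k _ hE (hdist.trans hkz)).1 (ω k)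
    refine ⟨hmem, ?_⟩
    calc dist (treeNode z child ω (k + 1)) z ≤ r * b ^ k + 2 * r * (1 - b ^ k) :=
          (dist_triangle _ _ z).trans (add_le_add hstep hdist)
      _ ≤ 2 * r * (1 - b ^ (k + 1)) := by
          rw [pow_succ]
          nlinarith [mul_nonneg (mul_nonneg hr hbk) (sub_nonneg.mpr hb)]

lemma dist_treeNode_succ (hc : IsBranching E z r b child) (hz : z ∈ E) (hr : 0 ≤ r)
    (hb0 : 0 ≤ b) (hb : b ≤ 1 / 2) (ω : ℕ → Fin M) (k : ℕ) :
    dist (treeNode z child ω (k + 1)) (treeNode z child ω k) ≤ r * b ^ k := by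
  obtain ⟨hE, hdist⟩ := hc.treeNode_mem_and_dist_le hz hr hb0 hb ω k
  have hkz : 2 * r * (1 - b ^ k) ≤ 2 * r := by nlinarith [pow_nonneg hb0 k]
  exact ((hc k _ hE (hdist.trans hkz)).1 (ω k)).2

/-- Siblings are separated by construction; cousins because their parents are, and
`5 r bᵏ - 2 r bᵏ ≥ 5 r bᵏ⁺¹`. -/
lemma treeNode_separated (hc : IsBranching E z r b child) (hz : z ∈ E) (hr : 0 ≤ r)
    (hb0 : 0 ≤ b) (hb : b ≤ 1 / 2) {ω ω' : ℕ → Fin M} :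
    ∀ {k : ℕ}, (∃ i < k, ω i ≠ ω' i) →
      5 * (r * b ^ k) < dist (treeNode z child ω k) (treeNode z child ω' k)
  | 0, ⟨i, hi, _⟩ => absurd hi i.not_lt_zero
  | k + 1, h => by
    by_cases hprefix : ∃ i < k, ω i ≠ ω' i
    · have hparents := treeNode_separated hc hz hr hb0 hb hprefix
      have h₁ := hc.dist_treeNode_succ hz hr hb0 hb ω k
      have h₂ := hc.dist_treeNode_succ hz hr hb0 hb ω' k
      have hscale : 5 * (r * b ^ (k + 1)) ≤ 3 * (r * b ^ k) := by
        rw [pow_succ]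
        nlinarith [mul_nonneg hr (pow_nonneg hb0 k)]
      linarith [dist_triangle4 (treeNode z child ω k) (treeNode z child ω (k + 1))
        (treeNode z child ω' (k + 1)) (treeNode z child ω' k), dist_comm (treeNode z child ω k)
        (treeNode z child ω (k + 1))]
    · push Not at hprefix
      obtain ⟨i, hi, hne⟩ := h
      have hik : i = k := by
        by_contra hik
        exact hne (hprefix i (by omega))
      subst hik
      obtain ⟨hE, hdist⟩ := hc.treeNode_mem_and_dist_le hz hr hb0 hb ω i
      have hiz : 2 * r * (1 - b ^ i) ≤ 2 * r := by nlinarith [pow_nonneg hb0 i]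
      have hsib := (hc i _ hE (hdist.trans hiz)).2 hne
      simp only [treeNode]
      rwa [← treeNode_congr hprefix]

theorem exists_continuous_limit [CompleteSpace X] (hc : IsBranching E z r b child)
    (hE : IsClosed E) (hz : z ∈ E) (hr : 0 ≤ r) (hb0 : 0 ≤ b) (hb : b ≤ 1 / 2) :
    ∃ f : (ℕ → Fin M) → X, Continuous f ∧ (∀ ω, f ω ∈ E) ∧
      ∀ k ω ω', dist (f ω) (f ω') ≤ r * b ^ k → ∀ i < k, ω i = ω' i := by
  have hb1 : b < 1 := by linarith
  have hstep : ∀ ω k, dist (treeNode z child ω k) (treeNode z child ω (k + 1)) ≤ r * b ^ k :=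
    fun ω k => by rw [dist_comm]; exact hc.dist_treeNode_succ hz hr hb0 hb ω k
  choose f hf using fun ω => cauchySeq_tendsto_of_complete
    (cauchySeq_of_le_geometric b r hb1 (hstep ω))
  have htail : ∀ ω k, dist (treeNode z child ω k) (f ω) ≤ 2 * (r * b ^ k) := fun ω k => by
    refine (dist_le_of_le_geometric_of_tendsto b r hb1 (hstep ω) (hf ω) k).trans ?_
    rw [div_le_iff₀ (by linarith)]
    nlinarith [mul_nonneg hr (pow_nonneg hb0 k)]
  refine ⟨f, ?_, fun ω => ?_, fun k ω ω' hff' => ?_⟩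
  · refine TendstoUniformly.continuous (p := atTop) ?_
      (Frequently.of_forall fun k => continuous_treeNode z child k)
    have hlim : Tendsto (fun k : ℕ => 2 * (r * b ^ k)) atTop (𝓝 0) := by
      simpa using ((tendsto_pow_atTop_nhds_zero_of_lt_one hb0 hb1).const_mul r).const_mul 2
    refine Metric.tendstoUniformly_iff.mpr fun ε hε => ?_
    filter_upwards [hlim.eventually (gt_mem_nhds hε)] with k hk ω
    rw [dist_comm]
    exact (htail ω k).trans_lt hk
  · exact hE.mem_of_tendsto (hf ω) (Eventually.of_forall fun k =>
      (hc.treeNode_mem_and_dist_le hz hr hb0 hb ω k).1)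
  · by_contra! hdiff
    have hsep := hc.treeNode_separated hz hr hb0 hb hdiff
    linarith [dist_triangle4 (treeNode z child ω k) (f ω) (f ω') (treeNode z child ω' k),
      htail ω k, htail ω' k, dist_comm (f ω') (treeNode z child ω' k)]

end IsBranching

end Tree

section MassDistribution

open MeasureTheory
open scoped ENNReal

variable {X : Type*} [MetricSpace X] [MeasurableSpace X] [BorelSpace X]

/-- The mass distribution principle, with the mass bound checked only at the scales `r bᵏ`. -/
lemma smul_le_hausdorffMeasure_of_geometric {μ : Measure X} {r b t : ℝ} (hr : 0 < r)
    (hb0 : 0 < b) (hb1 : b < 1) (ht : 0 < t)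
    (hμ : ∀ (k : ℕ) (B : Set X), ediam B ≤ ENNReal.ofReal (r * b ^ k) →
      μ B ≤ ENNReal.ofReal (b ^ k) ^ t) :
    ENNReal.ofReal (r * b) ^ t • μ ≤ μH[t] := by
  refine Measure.le_hausdorffMeasure t _ (ENNReal.ofReal r) (by simpa using hr) fun B hB => ?_
  rw [Measure.smul_apply, smul_eq_mul]
  rcases eq_or_ne (ediam B) 0 with h0 | h0
  · have hlim : Tendsto (fun k : ℕ => ENNReal.ofReal (b ^ k) ^ t) atTop (𝓝 0) := by
      have hbk : Tendsto (fun k : ℕ => ENNReal.ofReal (b ^ k)) atTop (𝓝 0) := by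
        simpa using ENNReal.tendsto_ofReal (tendsto_pow_atTop_nhds_zero_of_lt_one hb0.le hb1)
      simpa [ENNReal.zero_rpow_of_pos ht, Function.comp_def] using
        ((ENNReal.continuous_rpow_const (y := t)).tendsto 0).comp hbk
    have hB : μ B = 0 := le_antisymm (ge_of_tendsto' hlim fun k => hμ k B (by simp [h0])) bot_le
    simp [hB]
  · have hfin : ediam B ≠ ⊤ := ne_top_of_le_ne_top ENNReal.ofReal_ne_top hB
    set δ := (ediam B).toReal
    have hδ : 0 < δ := ENNReal.toReal_pos h0 hfin
    obtain ⟨k, hk₁, hk₂⟩ := exists_nat_pow_near_of_lt_one (div_pos hδ hr)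
      ((div_le_one hr).mpr (ENNReal.toReal_le_of_le_ofReal hr.le hB)) hb0 hb1
    rw [lt_div_iff₀ hr] at hk₁
    rw [div_le_iff₀ hr] at hk₂
    calc ENNReal.ofReal (r * b) ^ t * μ B
        ≤ ENNReal.ofReal (r * b) ^ t * ENNReal.ofReal (b ^ k) ^ t := by
          gcongr
          refine hμ k B ?_
          rw [← ENNReal.ofReal_toReal hfin]
          exact ENNReal.ofReal_le_ofReal (by linarith)
      _ = ENNReal.ofReal (r * b ^ (k + 1)) ^ t := by
          rw [← ENNReal.mul_rpow_of_nonneg _ _ ht.le, ← ENNReal.ofReal_mul (by positivity)]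
          ring_nf
      _ ≤ ediam B ^ t := by
          rw [← ENNReal.ofReal_toReal hfin]
          gcongr
          linarith

lemma infinitePi_uniformOfFintype_cylinder (M : ℕ) [NeZero M] (ω : ℕ → Fin M) (k : ℕ) :
    Measure.infinitePi (fun _ => (PMF.uniformOfFintype (Fin M)).toMeasure)
      {ω' | ∀ i < k, ω' i = ω i} = (M : ℝ≥0∞)⁻¹ ^ k := by
  have hcyl : {ω' : ℕ → Fin M | ∀ i < k, ω' i = ω i} =
      Set.pi (Finset.range k : Set ℕ) fun i => {ω i} := by
    ext ω'
    simp
  rw [hcyl, Measure.infinitePi_pi _ fun i _ => measurableSet_singleton _]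
  simp [PMF.toMeasure_apply_singleton _ _ (measurableSet_singleton _)]

/-- Push the uniform Bernoulli measure forward by `f`: a set of diameter `≤ r bᵏ` meets the image
of a single depth-`k` cylinder, of mass `M⁻ᵏ ≤ bᵏᵗ`. -/
theorem ofReal_le_dimH_of_shift {E : Set X} {M : ℕ} {r b t : ℝ} (hr : 0 < r) (hb0 : 0 < b)
    (hb1 : b < 1) (ht : 0 < t) (hM : b⁻¹ ^ t ≤ M) {f : (ℕ → Fin M) → X} (hf : Measurable f)
    (hfE : ∀ ω, f ω ∈ E)
    (hsep : ∀ k ω ω', dist (f ω) (f ω') ≤ r * b ^ k → ∀ i < k, ω i = ω' i) :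
    ENNReal.ofReal t ≤ dimH E := by
  have hM0 : (0 : ℝ) < M := (Real.rpow_pos_of_pos (inv_pos.mpr hb0) t).trans_le hM
  have : NeZero M := ⟨by exact_mod_cast hM0.ne'⟩
  set P := Measure.infinitePi fun _ : ℕ => (PMF.uniformOfFintype (Fin M)).toMeasure
  set μ := P.map f
  have hMb : ∀ k : ℕ, (M : ℝ≥0∞)⁻¹ ^ k ≤ ENNReal.ofReal (b ^ k) ^ t := fun k => by
    have hreal : (M : ℝ)⁻¹ ≤ b ^ t := by
      rw [Real.inv_rpow hb0.le] at hM
      exact inv_le_of_inv_le₀ (by positivity) hM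
    rw [ENNReal.ofReal_rpow_of_nonneg (by positivity) ht.le, ← Real.rpow_pow_comm hb0.le,
      ENNReal.ofReal_pow (by positivity), ← ENNReal.ofReal_natCast, ← ENNReal.ofReal_inv_of_pos hM0]
    gcongr
  have hμ : ∀ (k : ℕ) (B : Set X), ediam B ≤ ENNReal.ofReal (r * b ^ k) →
      μ B ≤ ENNReal.ofReal (b ^ k) ^ t := by
    intro k B hB
    rw [← ediam_closure] at hB
    refine (measure_mono subset_closure).trans ?_
    rw [Measure.map_apply hf isClosed_closure.measurableSet]
    rcases (f ⁻¹' closure B).eq_empty_or_nonempty with hempty | ⟨ω₀, hω₀⟩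
    · simp [hempty]
    refine (measure_mono fun ω hω => ?_).trans
      ((infinitePi_uniformOfFintype_cylinder M ω₀ k).trans_le (hMb k))
    have hedist := (edist_le_ediam_of_mem (s := closure B) hω hω₀).trans hB
    rw [edist_dist] at hedist
    exact hsep k ω ω₀ ((ENNReal.ofReal_le_ofReal_iff (by positivity)).mp hedist)
  have hHμ := smul_le_hausdorffMeasure_of_geometric hr hb0 hb1 ht hμ
  have hμE : 1 ≤ μ E := by
    calc 1 = P (f ⁻¹' E) := by
          rw [show f ⁻¹' E = univ from eq_univ_of_forall hfE, measure_univ]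
      _ ≤ μ E := Measure.le_map_apply hf.aemeasurable E
  have hpos : μH[t] E ≠ 0 := by
    refine (lt_of_lt_of_le ?_ (hHμ E)).ne'
    rw [Measure.smul_apply, smul_eq_mul]
    exact ENNReal.mul_pos (by simp [hr, hb0]) (one_pos.trans_le hμE).ne'
  rw [← Real.coe_toNNReal t ht.le] at hpos
  exact le_dimH_of_hausdorffMeasure_ne_zero hpos

end MassDistribution

lemma IsMiniset.nonempty {d : ℕ} {F D : Set (Fin d → ℝ)} (hD : IsMiniset d F D) : D.Nonempty := by
  obtain ⟨-, -, -, -, hne⟩ := hD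
  exact hne

lemma IsMiniset.subset_Icc {d : ℕ} {F D : Set (Fin d → ℝ)} (hD : IsMiniset d F D) :
    D ⊆ Icc 0 1 := by
  obtain ⟨-, -, -, rfl, -⟩ := hD
  exact inter_subset_right

lemma exists_lt_rpow_add_one_le {K t s : ℝ} (hK : 0 < K) (ht : 0 ≤ t) (hts : t < s) (a : ℝ) :
    ∃ u, a < u ∧ u ^ t + 1 ≤ K * u ^ s := by
  obtain ⟨u, hu, hus⟩ := ((eventually_gt_atTop (max a 1)).and
    ((tendsto_rpow_atTop (sub_pos.mpr hts)).eventually_ge_atTop (2 / K))).exists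
  have hu1 : 1 < u := (le_max_right a 1).trans_lt hu
  have hut : 1 ≤ u ^ t := Real.one_le_rpow hu1.le ht
  refine ⟨u, (le_max_left a 1).trans_lt hu, ?_⟩
  calc u ^ t + 1 ≤ 2 * u ^ t := by linarith
    _ ≤ K * u ^ (s - t) * u ^ t := by
        gcongr
        rwa [div_le_iff₀' hK] at hus
    _ = K * u ^ s := by rw [mul_assoc, ← Real.rpow_add (by linarith), sub_add_cancel]

lemma ENNReal.ofReal_sSup_le_of_forall_lt {S : Set ℝ} {a : ENNReal}
    (h : ∀ s ∈ S, ∀ t < s, ENNReal.ofReal t ≤ a) : ENNReal.ofReal (sSup S) ≤ a := by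
  refine le_of_forall_lt_imp_le_of_dense fun c hc => ?_
  have hcS : c.toReal < sSup S := (ENNReal.lt_ofReal_iff_toReal_lt hc.ne_top).mp hc
  have hS : S.Nonempty := nonempty_iff_ne_empty.mpr fun hS => by
    simp only [hS, Real.sSup_empty] at hcS
    exact hcS.not_ge ENNReal.toReal_nonneg
  obtain ⟨s, hs, hcs⟩ := exists_lt_of_lt_csSup hS hcS
  simpa [ENNReal.ofReal_toReal hc.ne_top] using h s hs c.toReal hcs

/-- The inequality defining `lowerDim`, restricted to the balls that lie in `U`. -/
def IsLowerRegularIn (d : ℕ) (A U : Set (Fin d → ℝ)) (C s : ℝ) : Prop :=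
  ∀ x ∈ A, ∀ R r : ℝ, 0 < r → r < R → R < 1 → closedBall x R ⊆ U →
    C * (R / r) ^ s ≤ (coverNum d (closedBall x R ∩ A) r : ℝ)

namespace IsLowerRegularIn

variable {d : ℕ} {C s : ℝ}

lemma miniset {F D : Set (Fin d → ℝ)} (hF : IsLowerRegularIn d F univ C s)
    (hD : IsMiniset d F D) : IsLowerRegularIn d D (Icc 0 1) C s := by
  obtain ⟨lam, hlam, w, rfl, -⟩ := hD
  have hlam0 : 0 < lam := one_pos.trans_le hlam
  set σ : (Fin d → ℝ) → Fin d → ℝ := fun x => lam • x + w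
  have hσ : ∀ x y, dist (σ x) (σ y) = lam * dist x y := fun x y => by
    rw [dist_add_right, dist_smul₀, Real.norm_of_nonneg hlam0.le]
  rintro _ ⟨⟨x, hxF, rfl⟩, -⟩ R r hr hrR hR1 hball
  have hsub : closedBall x (lam⁻¹ * R) ∩ F ⊆
      (fun y => lam⁻¹ • (y - w)) '' (closedBall (σ x) R ∩ (σ '' F ∩ Icc 0 1)) := by
    rintro y ⟨hyx, hyF⟩
    have hσy : σ y ∈ closedBall (σ x) R := by
      rw [mem_closedBall, hσ, ← le_inv_mul_iff₀ hlam0]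
      exact hyx
    refine ⟨σ y, ⟨hσy, ⟨y, hyF, rfl⟩, hball hσy⟩, ?_⟩
    simp [σ, smul_smul, inv_mul_cancel₀ hlam0.ne']
  have hcover := coverNum_le_of_subset_image
    ((isCompact_closedBall (σ x) R).totallyBounded.subset inter_subset_left)
    (inv_nonneg.mpr hlam0.le) (fun y y' => by
      rw [dist_smul₀, dist_sub_right, Real.norm_of_nonneg (inv_nonneg.mpr hlam0.le)])
    hsub hr
  have hscale : lam⁻¹ * R < 1 :=
    (mul_le_of_le_one_left (hr.trans hrR).le (inv_le_one_of_one_le₀ hlam)).trans_lt hR1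
  calc C * (R / r) ^ s = C * ((lam⁻¹ * R) / (lam⁻¹ * r)) ^ s := by
        rw [mul_div_mul_left R r (inv_ne_zero hlam0.ne')]
    _ ≤ coverNum d (closedBall x (lam⁻¹ * R) ∩ F) (lam⁻¹ * r) :=
        hF x hxF _ _ (by positivity) (by gcongr) hscale (subset_univ _)
    _ ≤ coverNum d (closedBall (σ x) R ∩ (σ '' F ∩ Icc 0 1)) r := by exact_mod_cast hcover

/-- The part of a nearby `D n` in a slightly smaller ball lies within `δ` of a ball of `E`;
the factor `4 ^ s` absorbs the change of radii. -/
lemma of_tendsto_hausdorffDist {D : ℕ → Set (Fin d → ℝ)} {E U : Set (Fin d → ℝ)}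
    (hD : ∀ n, IsLowerRegularIn d (D n) U C s) (hDne : ∀ n, (D n).Nonempty)
    (hDb : ∀ n, Bornology.IsBounded (D n)) (hEb : Bornology.IsBounded E)
    (hDE : Tendsto (fun n => hausdorffDist (D n) E) atTop (𝓝 0)) (hC : 0 ≤ C) (hs : 0 ≤ s) :
    IsLowerRegularIn d E U (C / 4 ^ s) s := by
  intro x hxE R r hr hrR hR1 hball
  have hR : 0 < R := hr.trans hrR
  set δ := min ((R - r) / 5) (r / 2)
  have hδ : 0 < δ := lt_min (by linarith) (by linarith)
  have hδ₁ : δ ≤ (R - r) / 5 := min_le_left _ _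
  have hδ₂ : δ ≤ r / 2 := min_le_right _ _
  obtain ⟨n, hn⟩ := (hDE.eventually (gt_mem_nhds hδ)).exists
  have hfin : hausdorffEDist (D n) E ≠ ⊤ :=
    hausdorffEDist_ne_top_of_nonempty_of_bounded (hDne n) ⟨x, hxE⟩ (hDb n) hEb
  obtain ⟨y, hyD, hxy⟩ := exists_dist_lt_of_hausdorffDist_lt' hxE hn hfin
  have hnear : closedBall y (R - 2 * δ) ∩ D n ⊆ thickening δ (closedBall x R ∩ E) := by
    rintro p ⟨hpy, hpD⟩
    obtain ⟨q, hqE, hpq⟩ := exists_dist_lt_of_hausdorffDist_lt hpD hn hfin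
    refine mem_thickening_iff.mpr ⟨q, ⟨?_, hqE⟩, hpq⟩
    rw [mem_closedBall] at hpy ⊢
    linarith [dist_triangle4 q p y x, dist_comm q p, dist_comm y x]
  have hcover := coverNum_le_of_subset_thickening
    ((isCompact_closedBall x R).totallyBounded.subset inter_subset_left) hnear hr
  have hball' : closedBall y (R - 2 * δ) ⊆ closedBall x R :=
    closedBall_subset_closedBall' (by linarith [dist_comm x y])
  have hratio : R / r / 4 ≤ (R - 2 * δ) / (r + 2 * δ) := by
    rw [div_div, div_le_div_iff₀ (by positivity) (by positivity)]
    nlinarith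
  calc C / 4 ^ s * (R / r) ^ s = C * (R / r / 4) ^ s := by
        rw [Real.div_rpow (x := R / r) (by positivity) (by norm_num)]
        ring
    _ ≤ C * ((R - 2 * δ) / (r + 2 * δ)) ^ s := by gcongr
    _ ≤ coverNum d (closedBall y (R - 2 * δ) ∩ D n) (r + 2 * δ) :=
        hD n y hyD _ _ (by positivity) (by linarith) (by linarith) (hball'.trans hball)
    _ ≤ coverNum d (closedBall x R ∩ E) r := by exact_mod_cast hcover

lemma exists_pairwise_lt_dist {A U : Set (Fin d → ℝ)} (hA : IsLowerRegularIn d A U C s)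
    {x : Fin d → ℝ} (hx : x ∈ A) {R b : ℝ} (hR : 0 < R) (hR1 : R < 1) (hb : 0 < b)
    (hb10 : b < 1 / 10) (hball : closedBall x R ⊆ U) {M : ℕ} (hM : (M : ℝ) ≤ C * (10 * b)⁻¹ ^ s) :
    ∃ g : Fin M → Fin d → ℝ, (∀ i, g i ∈ A ∧ dist (g i) x ≤ R) ∧
      Pairwise fun i j => 5 * b * R < dist (g i) (g j) := by
  have hcov : M ≤ coverNum d (closedBall x R ∩ A) (2 * (5 * b * R)) := by
    have h := hA x hx R (10 * b * R) (by positivity) (by nlinarith) hR1 hball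
    rw [div_mul_cancel_right₀ hR.ne'] at h
    rw [show 2 * (5 * b * R) = 10 * b * R by ring]
    exact_mod_cast hM.trans h
  obtain ⟨P, hPA, hPM, hP⟩ := exists_finset_pairwise_lt_dist (by positivity) M hcov
  set e := P.equivFinOfCardEq hPM
  refine ⟨fun i => e.symm i, fun i => ?_, fun i j hij => ?_⟩
  · obtain ⟨hxR, hxA⟩ := hPA (e.symm i).2
    exact ⟨hxA, hxR⟩
  · exact hP (e.symm i).2 (e.symm j).2 fun h => hij (e.symm.injective (Subtype.ext h))

lemma exists_isBranching {A U : Set (Fin d → ℝ)} (hA : IsLowerRegularIn d A U C s)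
    {z : Fin d → ℝ} {r b : ℝ} (hr : 0 < r) (hr1 : r < 1) (hb : 0 < b) (hb10 : b < 1 / 10)
    (hU : closedBall z (3 * r) ⊆ U) {M : ℕ} (hM : (M : ℝ) ≤ C * (10 * b)⁻¹ ^ s) :
    ∃ child : ℕ → (Fin d → ℝ) → Fin M → Fin d → ℝ, IsBranching A z r b child := by
  have hchildren : ∀ k x, ∃ g : Fin M → Fin d → ℝ, x ∈ A → dist x z ≤ 2 * r →
      (∀ i, g i ∈ A ∧ dist (g i) x ≤ r * b ^ k) ∧
        Pairwise fun i j => 5 * (r * b ^ (k + 1)) < dist (g i) (g j) := by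
    intro k x
    by_cases hx : x ∈ A ∧ dist x z ≤ 2 * r
    · have hbk : b ^ k ≤ 1 := pow_le_one₀ hb.le (by linarith)
      have hball : closedBall x (r * b ^ k) ⊆ U := by
        refine (closedBall_subset_closedBall' ?_).trans hU
        nlinarith [hx.2]
      obtain ⟨g, hg, hsep⟩ := hA.exists_pairwise_lt_dist hx.1 (by positivity)
        (by nlinarith [pow_pos hb k]) hb hb10 hball hM
      refine ⟨g, fun _ _ => ⟨hg, fun i j hij => ?_⟩⟩
      calc 5 * (r * b ^ (k + 1)) = 5 * b * (r * b ^ k) := by ring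
        _ < dist (g i) (g j) := hsep hij
    · exact ⟨fun _ => z, fun hxA hxz => absurd ⟨hxA, hxz⟩ hx⟩
  choose child hchild using hchildren
  exact ⟨child, fun k x hx hxz => hchild k x hx hxz⟩

/-- Near `z`, `E` contains a Cantor set with `M ≈ C (10 b)⁻ˢ` branches at ratio `b`, and
`M ≥ b⁻ᵗ` once `b` is small. -/
theorem ofReal_le_dimH {E U : Set (Fin d → ℝ)} (hEU : IsLowerRegularIn d E U C s)
    (hE : IsClosed E) {z : Fin d → ℝ} (hz : z ∈ E) (hzU : z ∈ interior U) (hC : 0 < C) {t : ℝ}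
    (hts : t < s) : ENNReal.ofReal t ≤ dimH E := by
  rcases le_or_gt t 0 with ht | ht
  · simp [ENNReal.ofReal_of_nonpos ht]
  obtain ⟨ε, hε, hεU⟩ := Metric.mem_nhds_iff.mp (mem_interior_iff_mem_nhds.mp hzU)
  set r := min (ε / 4) (1 / 2)
  have hr : 0 < r := lt_min (by linarith) (by norm_num)
  have hrU : closedBall z (3 * r) ⊆ U :=
    (closedBall_subset_ball (by linarith [min_le_left (ε / 4) (1 / 2)])).trans hεU
  obtain ⟨u, hu, hut⟩ := exists_lt_rpow_add_one_le (div_pos hC (by positivity : (0 : ℝ) < 10 ^ s))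
    ht.le hts 10
  have hb : 0 < u⁻¹ := by positivity
  have hb10 : u⁻¹ < 1 / 10 := by rw [one_div]; exact inv_strictAnti₀ (by norm_num) hu
  have hM : (⌈u ^ t⌉₊ : ℝ) ≤ C * (10 * u⁻¹)⁻¹ ^ s := by
    calc (⌈u ^ t⌉₊ : ℝ) ≤ u ^ t + 1 := (Nat.ceil_lt_add_one (by positivity)).le
      _ ≤ C / 10 ^ s * u ^ s := hut
      _ = C * (10 * u⁻¹)⁻¹ ^ s := by
          rw [mul_inv, inv_inv, ← div_eq_inv_mul, Real.div_rpow (by positivity) (by norm_num)]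
          ring
  obtain ⟨child, hchild⟩ := hEU.exists_isBranching hr
    ((min_le_right _ _).trans_lt (by norm_num)) hb hb10 hrU hM
  obtain ⟨f, hf, hfE, hsep⟩ := hchild.exists_continuous_limit hE hz hr.le hb.le (by linarith)
  exact ofReal_le_dimH_of_shift hr hb (by linarith) ht (by rw [inv_inv]; exact Nat.le_ceil _)
    hf.measurable hfE hsep

end IsLowerRegularIn

theorem stmt3_general (d : ℕ) (F : Set (Fin d → ℝ)) :
    ∀ E : Set (Fin d → ℝ), InGallery d F E → ENNReal.ofReal (lowerDim d F) ≤ dimH E := by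
  rintro E ⟨⟨hEc, -, D, hD, hDE⟩, z, hzE, hz⟩
  refine ENNReal.ofReal_sSup_le_of_forall_lt fun s ⟨hs, C, hC, hFC⟩ t hts => ?_
  have hF' : IsLowerRegularIn d F univ C s := fun x hx R r hr hrR hR1 _ =>
    hFC R (hr.trans hrR) hR1 r hr hrR x hx
  have hE' : IsLowerRegularIn d E (Icc 0 1) (C / 4 ^ s) s :=
    .of_tendsto_hausdorffDist (fun n => hF'.miniset (hD n)) (fun n => (hD n).nonempty)
      (fun n => isCompact_Icc.isBounded.subset (hD n).subset_Icc) hEc.isBounded hDE hC.le hs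
  exact hE'.ofReal_le_dimH hEc.isClosed hzE hz (by positivity) hts

/-- If `F ⊆ [0,1]^d` is compact, every microset of `F` intersecting the open unit cube has
Hausdorff dimension at least the lower dimension of `F`. -/
theorem stmt3 (d : ℕ) (F : Set (Fin d → ℝ)) (hF : IsCompact F)
    (hFsub : F ⊆ Icc 0 1) :
    ∀ E : Set (Fin d → ℝ), InGallery d F E → ENNReal.ofReal (lowerDim d F) ≤ dimH E :=
  stmt3_general d F
end

section
/- If F ⊆ ℝ^d is compact with lower dimension dim_L F = 0, then the gallery G_F contains a singleton: there is a sequence of minisets of F converging in the Hausdorff metric to a one-point subset of [0,1]^d lying in the interior (0,1)^d. -/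
/-!
If `F` were uniformly perfect with a constant `δ > 0` (every ball `B(x, ρ)`, `x ∈ F`, `ρ ≤ 1/2`,
meets `F` outside `B(x, δρ)`), splitting balls `n` times would give `2^n` points of
`F ∩ B(x, ρ)` that are `(δ/6)^n ρ`-separated, so `dim_L F ≥ log 2 / log (6/δ) > 0`.
Hence `dim_L F = 0` provides, for every `ε > 0`, a ball `B(x, ρ)` in which `F` lies within `ερ`
of `x`. Rescaling that ball onto the unit cube gives a miniset within `ε/2` of the centre of the
cube, and letting `ε → 0` the centre is a microset.
-/

open Set Metric Filter Topology

section CoverNum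

variable {d : ℕ}

lemma exists_finset_cover_of_subset_closedBall {A : Set (Fin d → ℝ)} {x : Fin d → ℝ} {R r : ℝ}
    (hr : 0 < r) (hA : A ⊆ closedBall x R) :
    ∃ t : Finset (Fin d → ℝ), t.card ≤ (2 * ⌈R / r⌉₊ + 1) ^ d ∧
      A ⊆ ⋃ c ∈ t, closedBall c (r / 2) := by
  classical
  set m : ℕ := ⌈R / r⌉₊
  let grid : (Fin d → ℤ) → Fin d → ℝ := fun k => x + r • fun i => (k i : ℝ)
  refine ⟨(Fintype.piFinset fun _ => Finset.Icc (-(m : ℤ)) m).image grid, ?_, ?_⟩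
  · refine Finset.card_image_le.trans_eq ?_
    simp only [Fintype.card_piFinset, Int.card_Icc, Finset.prod_const, Finset.card_univ,
      Fintype.card_fin]
    congr 1
    omega
  intro z hz
  have hzx : ∀ i, |z i - x i| ≤ R := fun i => by
    simpa [Real.dist_eq] using (dist_le_pi_dist z x i).trans (mem_closedBall.1 (hA hz))
  let k : Fin d → ℤ := fun i => round ((z i - x i) / r)
  have hk : ∀ i, |(z i - x i) / r - k i| ≤ 1 / 2 := fun i => abs_sub_round _
  refine mem_iUnion₂.2 ⟨grid k, Finset.mem_image_of_mem _ (Fintype.mem_piFinset.2 fun i => ?_), ?_⟩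
  · have hki : |((k i : ℤ) : ℝ)| < m + 1 := by
      have h1 : |(z i - x i) / r| ≤ R / r := by
        rw [abs_div, abs_of_pos hr]; exact div_le_div_of_nonneg_right (hzx i) hr.le
      have h2 := abs_sub_abs_le_abs_sub ((k i : ℤ) : ℝ) ((z i - x i) / r)
      rw [abs_sub_comm] at h2
      linarith [Nat.le_ceil (R / r), hk i]
    rw [Finset.mem_Icc, ← abs_le]
    exact_mod_cast Int.lt_add_one_iff.1 (by exact_mod_cast hki)
  · refine (dist_pi_le_iff (by positivity)).2 fun i => ?_
    have : z i - grid k i = r * ((z i - x i) / r - k i) := by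
      simp only [grid, Pi.add_apply, Pi.smul_apply, smul_eq_mul]; field_simp; ring
    rw [Real.dist_eq, this, abs_mul, abs_of_pos hr]
    nlinarith [hk i]

lemma coverNum_le_of_subset_closedBall {A : Set (Fin d → ℝ)} {x : Fin d → ℝ} {R r : ℝ}
    (hr : 0 < r) (hA : A ⊆ closedBall x R) :
    coverNum d A r ≤ (2 * ⌈R / r⌉₊ + 1) ^ d := by
  obtain ⟨t, hcard, hcov⟩ := exists_finset_cover_of_subset_closedBall hr hA
  exact (Nat.sInf_le ⟨t, rfl, hcov⟩ : coverNum d A r ≤ t.card).trans hcard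

/-- Two points of an `r`-separated set cannot share a cube of side `r`. -/
lemma card_le_coverNum {A : Set (Fin d → ℝ)} (hA : Bornology.IsBounded A) {r : ℝ} (hr : 0 < r)
    {T : Finset (Fin d → ℝ)} (hTA : ↑T ⊆ A)
    (hT : (T : Set (Fin d → ℝ)).Pairwise fun a b => r < dist a b) :
    T.card ≤ coverNum d A r := by
  obtain ⟨R, hR⟩ := (isBounded_iff_subset_closedBall 0).1 hA
  obtain ⟨t₀, -, ht₀⟩ := exists_finset_cover_of_subset_closedBall hr hR
  refine le_csInf ⟨t₀.card, t₀, rfl, ht₀⟩ ?_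
  rintro _ ⟨t, rfl, hcov⟩
  have hcenter : ∀ a ∈ T, ∃ c ∈ t, dist a c ≤ r / 2 := fun a ha => by
    simpa only [mem_iUnion₂, mem_closedBall, exists_prop] using hcov (hTA ha)
  choose! g hgt hg using hcenter
  refine Finset.card_le_card_of_injOn g (fun a ha => hgt a ha) fun a ha b hb hab => ?_
  by_contra hne
  have : dist a b ≤ r := by
    calc dist a b ≤ dist a (g a) + dist b (g b) := by
          simpa only [hab] using dist_triangle_right a b (g b)
      _ ≤ r / 2 + r / 2 := add_le_add (hg a ha) (hg b hb)
      _ = r := add_halves r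
  exact (hT ha hb hne).not_ge this

end CoverNum

/-- Uniform perfectness, at the scales `ρ ≤ 1/2`: those are the balls that the homotheties of ratio
`λ = 1/(2ρ) ≥ 1` allowed for minisets blow up onto the unit cube. -/
def UniformlyPerfect {X : Type*} [PseudoMetricSpace X] (δ : ℝ) (F : Set X) : Prop :=
  ∀ x ∈ F, ∀ ρ : ℝ, 0 < ρ → ρ ≤ 1 / 2 → ∃ y ∈ F, dist y x ≤ ρ ∧ δ * ρ < dist y x

namespace UniformlyPerfect

variable {X : Type*} [PseudoMetricSpace X] {δ : ℝ} {F : Set X}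

lemma lt_one (hF : UniformlyPerfect δ F) {x : X} (hx : x ∈ F) : δ < 1 := by
  obtain ⟨y, -, hle, hlt⟩ := hF x hx (1 / 2) (by norm_num) le_rfl
  linarith

/-- Splitting each ball into two well separated sub-balls `n` times gives a binary tree whose
`2 ^ n` leaves are `(δ/6)^n ρ`-separated. -/
lemma exists_separated_finset (hF : UniformlyPerfect δ F) (hδ : 0 < δ) (n : ℕ) {x : X}
    (hx : x ∈ F) {ρ : ℝ} (hρ : 0 < ρ) (hρ_le : ρ ≤ 1 / 2) :
    ∃ T : Finset X, T.card = 2 ^ n ∧ ↑T ⊆ F ∩ closedBall x ρ ∧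
      (T : Set X).Pairwise fun a b => (δ / 6) ^ n * ρ < dist a b := by
  classical
  induction n generalizing x ρ with
  | zero => exact ⟨{x}, rfl, by simp [hx, hρ.le], by simp⟩
  | succ n ih =>
    have hδ1 := hF.lt_one hx
    obtain ⟨y, hy, hyx, hδy⟩ := hF x hx (ρ / 2) (by positivity) (by linarith)
    set ρ' := δ / 6 * ρ with hρ'
    have hρ'0 : 0 < ρ' := by positivity
    have hρ'ρ : ρ' ≤ ρ / 6 := by rw [hρ']; nlinarith
    obtain ⟨T₁, hc₁, hT₁, hs₁⟩ := ih hx hρ'0 (by linarith)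
    obtain ⟨T₂, hc₂, hT₂, hs₂⟩ := ih hy hρ'0 (by linarith)
    -- points of the two subtrees lie within `ρ'` of `x` and of `y`, while `δρ/2 - 2ρ' = ρ'`
    have hcross : ∀ a ∈ T₁, ∀ b ∈ T₂, ρ' < dist a b := fun a ha b hb => by
      have ha' := mem_closedBall.1 (hT₁ ha).2
      have hb' := mem_closedBall.1 (hT₂ hb).2
      have := dist_triangle4 y b a x
      rw [dist_comm y b, dist_comm b a] at this
      linarith
    have hpow : (δ / 6) ^ n * ρ' ≤ ρ' :=
      mul_le_of_le_one_left hρ'0.le (pow_le_one₀ (by positivity) (by linarith))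
    refine ⟨T₁ ∪ T₂, ?_, ?_, ?_⟩
    · rw [Finset.card_union_of_disjoint, hc₁, hc₂, pow_succ, mul_two]
      exact Finset.disjoint_left.2 fun a ha₁ ha₂ => (hcross a ha₁ a ha₂).not_ge (by simp [hρ'0.le])
    · rw [Finset.coe_union, union_subset_iff]
      refine ⟨hT₁.trans (inter_subset_inter_right _ (closedBall_subset_closedBall (by linarith))),
        fun a ha => ⟨(hT₂ ha).1, ?_⟩⟩
      have htri := dist_triangle a y x
      have hay := mem_closedBall.1 (hT₂ ha).2
      exact mem_closedBall.2 (by linarith)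
    · have hsep : (δ / 6) ^ (n + 1) * ρ = (δ / 6) ^ n * ρ' := by rw [hρ']; ring
      rw [hsep, Finset.coe_union, pairwise_union]
      exact ⟨hs₁, hs₂, fun a ha b hb _ => ⟨(hpow.trans_lt (hcross a ha b hb)),
        by rw [dist_comm]; exact hpow.trans_lt (hcross a ha b hb)⟩⟩

end UniformlyPerfect

def lowerDimExponents (d : ℕ) (F : Set (Fin d → ℝ)) : Set ℝ :=
  {s : ℝ | 0 ≤ s ∧ ∃ C : ℝ, 0 < C ∧ ∀ R : ℝ, 0 < R → R < 1 → ∀ r : ℝ, 0 < r → r < R →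
    ∀ x ∈ F, C * (R / r) ^ s ≤ (coverNum d (closedBall x R ∩ F) r : ℝ)}

section LowerDim

variable {d : ℕ} {F : Set (Fin d → ℝ)}

lemma le_of_mem_lowerDimExponents (hne : F.Nonempty) {s : ℝ} (hs : s ∈ lowerDimExponents d F) :
    s ≤ d := by
  obtain ⟨x, hx⟩ := hne
  obtain ⟨-, C, hC, hcov⟩ := hs
  by_contra! hds
  have htend : Tendsto (fun q : ℝ => C * q ^ (s - d)) atTop atTop :=
    (tendsto_rpow_atTop (by linarith)).const_mul_atTop hC
  obtain ⟨q, hq, hq2⟩ :=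
    ((htend.eventually_gt_atTop ((4 : ℝ) ^ d)).and (eventually_ge_atTop 2)).exists
  have hq0 : 0 < q := by linarith
  have hr : (0 : ℝ) < 1 / (2 * q) := by positivity
  have hrR : 1 / (2 * q) < (1 / 2 : ℝ) := by
    rw [div_lt_div_iff₀ (by positivity) two_pos]; linarith
  have hRr : (1 / 2 : ℝ) / (1 / (2 * q)) = q := by field_simp
  have hlower := hcov (1 / 2) (by norm_num) (by norm_num) _ hr hrR x hx
  have hupper := coverNum_le_of_subset_closedBall hr
    (inter_subset_left (s := closedBall x (1 / 2)) (t := F))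
  rw [hRr] at hlower hupper
  have hgrid : (2 * ⌈q⌉₊ + 1 : ℝ) ≤ 4 * q := by linarith [Nat.ceil_lt_add_one hq0.le]
  have hbound : C * q ^ (s - d) * q ^ d ≤ 4 ^ d * q ^ d := calc
    C * q ^ (s - d) * q ^ d = C * q ^ s := by
      rw [mul_assoc, ← Real.rpow_natCast, ← Real.rpow_add hq0, sub_add_cancel]
    _ ≤ coverNum d (closedBall x (1 / 2) ∩ F) (1 / (2 * q)) := hlower
    _ ≤ (2 * ⌈q⌉₊ + 1 : ℝ) ^ d := by exact_mod_cast hupper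
    _ ≤ (4 * q) ^ d := by gcongr
    _ = 4 ^ d * q ^ d := mul_pow _ _ _
  linarith [le_of_mul_le_mul_right hbound (pow_pos hq0 d)]

lemma one_le_coverNum {A : Set (Fin d → ℝ)} (hA : Bornology.IsBounded A) (hne : A.Nonempty)
    {r : ℝ} (hr : 0 < r) : 1 ≤ coverNum d A r := by
  obtain ⟨x, hx⟩ := hne
  simpa using card_le_coverNum hA hr (T := {x}) (by simpa using hx) (by simp)

namespace UniformlyPerfect

variable {δ : ℝ}

lemma two_pow_le_coverNum (hF : UniformlyPerfect δ F) (hδ : 0 < δ) (n : ℕ) {x : Fin d → ℝ}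
    (hx : x ∈ F) {ρ R r : ℝ} (hρ : 0 < ρ) (hρ_le : ρ ≤ 1 / 2) (hρR : ρ ≤ R) (hr : 0 < r)
    (hrn : r ≤ (δ / 6) ^ n * ρ) :
    2 ^ n ≤ coverNum d (closedBall x R ∩ F) r := by
  obtain ⟨T, hcard, hTF, hT⟩ := hF.exists_separated_finset hδ n hx hρ hρ_le
  rw [← hcard]
  refine card_le_coverNum (isBounded_closedBall.subset inter_subset_left) hr
    (fun a ha => ⟨closedBall_subset_closedBall hρR (hTF ha).2, (hTF ha).1⟩)
    (hT.mono' fun a b h => hrn.trans_lt h)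

/-- With `q = 6/δ`, a ball of radius `R` needs at least `2^n ≈ (R/r)^(log_q 2)` cubes of side
`r`, where `q^n ≈ R/r`. -/
lemma exists_pos_mem_lowerDimExponents (hF : UniformlyPerfect δ F) (hδ : 0 < δ)
    (hδ1 : δ < 1) : ∃ s, 0 < s ∧ s ∈ lowerDimExponents d F := by
  set q := 6 / δ
  have hq : 1 < q := by rw [lt_div_iff₀ hδ]; linarith
  set s := Real.logb q 2
  have hs : 0 < s := Real.logb_pos hq one_lt_two
  refine ⟨s, hs, hs.le, (1 / 2) ^ s / 2, by positivity, fun R hR hR1 r hr hrR x hx => ?_⟩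
  set ρ := R / 2 with hρ
  have hC : (1 / 2) ^ s / 2 * (R / r) ^ s = (ρ / r) ^ s / 2 := by
    rw [div_mul_eq_mul_div, ← Real.mul_rpow (by norm_num) (by positivity), hρ]
    ring_nf
  rw [hC]
  rcases le_or_gt ρ r with hρr | hrρ
  · have h1 : (ρ / r) ^ s ≤ 1 := Real.rpow_le_one (by positivity) ((div_le_one hr).2 hρr) hs.le
    have h2 : (1 : ℝ) ≤ coverNum d (closedBall x R ∩ F) r := by
      exact_mod_cast one_le_coverNum (isBounded_closedBall.subset inter_subset_left)
        ⟨x, mem_closedBall_self hR.le, hx⟩ hr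
    linarith
  · obtain ⟨n, hn, hn1⟩ := exists_nat_pow_near ((one_le_div hr).2 hrρ.le) hq
    have hsep : r ≤ (δ / 6) ^ n * ρ := by
      rw [← inv_div 6 δ, inv_pow, inv_mul_eq_div, le_div_iff₀ (by positivity), mul_comm]
      exact (le_div_iff₀ hr).1 hn
    have hN : (2 : ℝ) ^ n ≤ coverNum d (closedBall x R ∩ F) r := by
      exact_mod_cast hF.two_pow_le_coverNum hδ n hx (by positivity) (by linarith) (by linarith)
        hr hsep
    have hpow : (ρ / r) ^ s ≤ 2 ^ (n + 1) := calc
      (ρ / r) ^ s ≤ (q ^ (n + 1)) ^ s := Real.rpow_le_rpow (by positivity) hn1.le hs.le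
      _ = (q ^ s) ^ (n + 1) := by
        rw [← Real.rpow_natCast, ← Real.rpow_mul (by positivity), mul_comm, Real.rpow_mul
          (by positivity), Real.rpow_natCast]
      _ = 2 ^ (n + 1) := by rw [Real.rpow_logb (by positivity) hq.ne' two_pos]
    rw [pow_succ] at hpow
    linarith

lemma lowerDim_pos (hF : UniformlyPerfect δ F) (hδ : 0 < δ) (hne : F.Nonempty) :
    0 < lowerDim d F := by
  obtain ⟨x, hx⟩ := hne
  obtain ⟨s, hs, hmem⟩ := hF.exists_pos_mem_lowerDimExponents (d := d) hδ (hF.lt_one hx)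
  -- `sSup` of a set that is not bounded above is `0`
  have hbdd : BddAbove (lowerDimExponents d F) :=
    ⟨d, fun _ ht => le_of_mem_lowerDimExponents ⟨x, hx⟩ ht⟩
  exact hs.trans_le (le_csSup hbdd hmem)

end UniformlyPerfect

end LowerDim

section Miniset

variable {d : ℕ}

noncomputable def cubeCenter (d : ℕ) : Fin d → ℝ := fun _ => 1 / 2

lemma closedBall_cubeCenter : closedBall (cubeCenter d) (1 / 2) = Icc 0 1 := by
  rw [closedBall_pi _ (by norm_num), ← pi_univ_Icc]
  refine pi_congr rfl fun i _ => ?_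
  rw [Real.closedBall_eq_Icc]
  norm_num [cubeCenter]

lemma cubeCenter_mem_interior : cubeCenter d ∈ interior (Icc 0 1) :=
  interior_maximal (closedBall_cubeCenter ▸ ball_subset_closedBall) isOpen_ball
    (mem_ball_self (by norm_num))

/-- The miniset is the image of `F` under the homothety taking `closedBall x ρ` onto the unit
cube. -/
lemma exists_miniset_hausdorffDist_cubeCenter_le {F : Set (Fin d → ℝ)} {x : Fin d → ℝ}
    (hx : x ∈ F) {ρ ε : ℝ} (hρ : 0 < ρ) (hρ_le : ρ ≤ 1 / 2)
    (hflat : ∀ y ∈ F, dist y x ≤ ρ → dist y x ≤ ε * ρ) :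
    ∃ D, IsMiniset d F D ∧ hausdorffDist D {cubeCenter d} ≤ ε / 2 := by
  set lam := 1 / (2 * ρ)
  have hlam : 0 < lam := by positivity
  have hlamρ : lam * ρ = 1 / 2 := by simp only [lam]; field_simp
  set t := cubeCenter d - lam • x
  have hx_center : lam • x + t = cubeCenter d := by simp [t]
  have hdist : ∀ y, dist (lam • y + t) (cubeCenter d) = lam * dist y x := fun y => by
    rw [← hx_center, dist_add_right, dist_smul₀, Real.norm_of_nonneg hlam.le]
  have hcenter : cubeCenter d ∈ ((fun y => lam • y + t) '' F) ∩ Icc 0 1 :=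
    ⟨⟨x, hx, hx_center⟩, closedBall_cubeCenter ▸ mem_closedBall_self (by norm_num)⟩
  have hε : 0 ≤ ε := nonneg_of_mul_nonneg_left (by simpa using hflat x hx (by simp [hρ.le])) hρ
  refine ⟨_, ⟨lam, ?_, t, rfl, _, hcenter⟩, hausdorffDist_le_of_mem_dist (by positivity) ?_ ?_⟩
  · rw [le_div_iff₀ (by positivity)]; linarith
  · rintro _ ⟨⟨y, hy, rfl⟩, hyI⟩
    refine ⟨_, rfl, ?_⟩
    rw [← closedBall_cubeCenter, mem_closedBall, hdist] at hyI
    have hyx : dist y x ≤ ρ := le_of_mul_le_mul_left (hlamρ ▸ hyI) hlam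
    rw [hdist]
    calc lam * dist y x ≤ lam * (ε * ρ) := by gcongr; exact hflat y hy hyx
      _ = ε / 2 := by rw [mul_left_comm, hlamρ]; ring
  · rintro _ rfl
    exact ⟨_, hcenter, by rw [dist_self]; positivity⟩

end Miniset

theorem stmt8_general (d : ℕ) (F : Set (Fin d → ℝ)) (hne : F.Nonempty)
    (h0 : lowerDim d F = 0) :
    ∃ x : Fin d → ℝ, x ∈ interior (Icc (0 : Fin d → ℝ) 1) ∧ IsMicroset d F {x} := by
  have hminisets : ∀ n : ℕ, ∃ D, IsMiniset d F D ∧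
      hausdorffDist D {cubeCenter d} ≤ 1 / ((n : ℝ) + 1) := fun n => by
    have hε : (0 : ℝ) < 1 / ((n : ℝ) + 1) := by positivity
    have hnot : ¬UniformlyPerfect (1 / ((n : ℝ) + 1)) F := fun hF =>
      (hF.lowerDim_pos hε hne).ne' h0
    simp only [UniformlyPerfect, not_forall, not_exists, not_and, not_lt] at hnot
    obtain ⟨x, hx, ρ, hρ, hρ_le, hflat⟩ := hnot
    obtain ⟨D, hD, hdist⟩ := exists_miniset_hausdorffDist_cubeCenter_le hx hρ hρ_le hflat
    exact ⟨D, hD, hdist.trans (by linarith)⟩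
  choose D hD hdist using hminisets
  refine ⟨cubeCenter d, cubeCenter_mem_interior, isCompact_singleton,
    singleton_subset_iff.2 (interior_subset cubeCenter_mem_interior), D, hD, ?_⟩
  exact squeeze_zero (fun _ => hausdorffDist_nonneg) hdist tendsto_one_div_add_atTop_nhds_zero_nat

/-- If a nonempty compact set has lower dimension zero, then its gallery contains a singleton:
a one-point microset lying in the interior of the unit cube. -/
theorem stmt8 (d : ℕ) (F : Set (Fin d → ℝ)) (hF : IsCompact F) (hne : F.Nonempty)
    (h0 : lowerDim d F = 0) :
    ∃ x : Fin d → ℝ, x ∈ interior (Icc (0 : Fin d → ℝ) 1) ∧ IsMicroset d F {x} :=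
  stmt8_general d F hne h0
end

section
/- Let F ⊆ ℝ^d be compact and suppose that for every integer k > 1 there exist a point x ∈ F and R ∈ (0,1) such that F ∩ Q(x,R) can be covered by a single cube of side length 2^{-k}R. Then F has a microset which is a singleton: some sequence of minisets of F converges in the Hausdorff metric to a one-point set. -/
open Set Metric Filter Topology

/-!
Rescale `Q(xₖ, Rₖ)` onto `[0,1]^d`, sending `xₖ` to the centre `p` of the unit cube. Every point
of `F ∩ Q(xₖ, Rₖ)` lies within `2^{-k} Rₖ` of `xₖ` (both lie in the small covering cube), so the
resulting miniset contains `p` and lies within `2^{-k}` of it; hence the minisets converge to `{p}`.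
-/

section Homothety

variable {E : Type*} [NormedAddCommGroup E] [NormedSpace ℝ E]

noncomputable def homothetyTo (x p : E) (R : ℝ) (y : E) : E :=
  R⁻¹ • y + (p - R⁻¹ • x)

@[simp]
lemma homothetyTo_self (x p : E) (R : ℝ) : homothetyTo x p R x = p := by
  simp [homothetyTo]

lemma dist_homothetyTo {R : ℝ} (hR : 0 < R) (x p a b : E) :
    dist (homothetyTo x p R a) (homothetyTo x p R b) = R⁻¹ * dist a b := by
  rw [homothetyTo, homothetyTo, dist_add_right, dist_smul₀,
    Real.norm_of_nonneg (inv_nonneg.2 hR.le)]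

lemma dist_homothetyTo_self {R : ℝ} (hR : 0 < R) (x p y : E) :
    dist (homothetyTo x p R y) p = R⁻¹ * dist y x := by
  rw [← dist_homothetyTo hR x p y x, homothetyTo_self]

end Homothety

lemma inter_closedBall_subset_closedBall_two_mul {X : Type*} [PseudoMetricSpace X] {F : Set X}
    {x c : X} {r s : ℝ} (hx : x ∈ F) (hr : 0 ≤ r) (hF : F ∩ closedBall x r ⊆ closedBall c s) :
    F ∩ closedBall x r ⊆ closedBall x (2 * s) := by
  intro y hy
  have hyc : dist y c ≤ s := hF hy
  have hxc : dist x c ≤ s := hF ⟨hx, mem_closedBall_self hr⟩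
  rw [mem_closedBall]
  linarith [dist_triangle_right y x c]

lemma hausdorffDist_singleton_le {X : Type*} [PseudoMetricSpace X] {s : Set X} {p : X} {r : ℝ}
    (hp : p ∈ s) (hs : s ⊆ closedBall p r) : hausdorffDist s {p} ≤ r := by
  have hr : 0 ≤ r := nonempty_closedBall.1 ⟨p, hs hp⟩
  refine hausdorffDist_le_of_mem_dist hr (fun y hy => ⟨p, rfl, hs hy⟩) fun y hy => ?_
  rw [mem_singleton_iff.1 hy]
  exact ⟨p, hp, by rwa [dist_self]⟩

lemma closedBall_half_eq_Icc (ι : Type*) [Fintype ι] :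
    closedBall (fun _ : ι => (1 / 2 : ℝ)) (1 / 2) = Icc 0 1 := by
  rw [closedBall_pi _ (by norm_num), ← pi_univ_Icc]
  refine pi_congr rfl fun i _ => ?_
  rw [Real.closedBall_eq_Icc]
  norm_num

lemma isMiniset_homothetyTo {d : ℕ} {F : Set (Fin d → ℝ)} {x p : Fin d → ℝ} {R : ℝ}
    (hR0 : 0 < R) (hR1 : R ≤ 1) (hx : x ∈ F) (hp : p ∈ Icc 0 1) :
    IsMiniset d F (homothetyTo x p R '' F ∩ Icc 0 1) :=
  ⟨R⁻¹, one_le_inv₀ hR0 |>.2 hR1, p - R⁻¹ • x, rfl, p, ⟨x, hx, homothetyTo_self x p R⟩, hp⟩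

lemma homothetyTo_image_inter_Icc_subset {d : ℕ} {F : Set (Fin d → ℝ)} {x c : Fin d → ℝ}
    {R ρ : ℝ} (hR : 0 < R) (hx : x ∈ F) (hc : F ∩ closedBall x (R / 2) ⊆ closedBall c (ρ / 2)) :
    homothetyTo x (fun _ => 1 / 2) R '' F ∩ Icc 0 1 ⊆ closedBall (fun _ => 1 / 2) (ρ / R) := by
  rintro _ ⟨⟨y, hy, rfl⟩, hy01⟩
  rw [← closedBall_half_eq_Icc, mem_closedBall, dist_homothetyTo_self hR,
    inv_mul_le_iff₀ hR] at hy01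
  have hyx : dist y x ≤ 2 * (ρ / 2) :=
    inter_closedBall_subset_closedBall_two_mul hx (by positivity) hc
      ⟨hy, mem_closedBall.2 (by linarith)⟩
  rw [mem_closedBall, dist_homothetyTo_self hR, inv_mul_eq_div, div_le_div_iff_of_pos_right hR]
  linarith

theorem stmt9_general (d : ℕ) (F : Set (Fin d → ℝ))
    (h : ∀ k : ℕ, 1 < k → ∃ x ∈ F, ∃ R : ℝ, 0 < R ∧ R < 1 ∧ ∃ c : Fin d → ℝ,
      F ∩ closedBall x (R / 2) ⊆ closedBall c (R / 2 ^ k / 2)) :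
    ∃ x : Fin d → ℝ, IsMicroset d F {x} := by
  choose x hxF R hR0 hR1 c hc using fun n : ℕ => h (n + 2) (by omega)
  set p : Fin d → ℝ := fun _ => 1 / 2
  have hp : p ∈ Icc 0 1 := closedBall_half_eq_Icc (Fin d) ▸ mem_closedBall_self (by norm_num)
  set D := fun n => homothetyTo (x n) p (R n) '' F ∩ Icc 0 1
  have hdist (n : ℕ) : hausdorffDist (D n) {p} ≤ (1 / 2) ^ (n + 2) := by
    refine hausdorffDist_singleton_le ⟨⟨x n, hxF n, homothetyTo_self _ _ _⟩, hp⟩ ?_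
    convert homothetyTo_image_inter_Icc_subset (hR0 n) (hxF n) (hc n) using 2
    rw [one_div_pow]
    field_simp [(hR0 n).ne']
  have hlim : Tendsto (fun n : ℕ => (1 / 2 : ℝ) ^ (n + 2)) atTop (𝓝 0) :=
    (tendsto_pow_atTop_nhds_zero_of_lt_one (by norm_num) (by norm_num)).comp
      (tendsto_add_atTop_nat 2)
  exact ⟨p, isCompact_singleton, singleton_subset_iff.2 hp, D,
    fun n => isMiniset_homothetyTo (hR0 n) (hR1 n).le (hxF n) hp,
    squeeze_zero (fun _ => hausdorffDist_nonneg) hdist hlim⟩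

/-- If for every `k > 1` some cube `Q(x,R)` with `x ∈ F`, `R ∈ (0,1)`, is such that
`F ∩ Q(x,R)` is covered by a single cube of side `2^{-k} R`, then `F` has a singleton
microset. -/
theorem stmt9 (d : ℕ) (F : Set (Fin d → ℝ)) (hF : IsCompact F) (hne : F.Nonempty)
    (h : ∀ k : ℕ, 1 < k → ∃ x ∈ F, ∃ R : ℝ, 0 < R ∧ R < 1 ∧ ∃ c : Fin d → ℝ,
      F ∩ closedBall x (R / 2) ⊆ closedBall c (R / 2 ^ k / 2)) :
    ∃ x : Fin d → ℝ, IsMicroset d F {x} :=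
  stmt9_general d F h
end
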